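/- arXiv:1611.08954 — 2 statements merged into one kernel-verified Lean document; each statement's English description precedes it below -/
import Mathlib

section
/- Weyl's perturbation theorem: for any m×n real matrices P and Q and any index i, the difference of the i-th singular values satisfies |σ_i(P+Q) − σ_i(P)| ≤ ‖Q‖₂. -/
/-!
`σ_i(A)²` is the `i`-th largest eigenvalue of `A Aᴴ`, whose quadratic form is `x ↦ ‖Aᴴ x‖²`.
Expanding in a sorted orthonormal eigenbasis, `‖(A + B)ᴴ x‖ ≥ σ_i(A + B) ‖x‖` on the span of the
top `i + 1` eigenvectors of `(A + B)(A + B)ᴴ`, and `‖Aᴴ x‖ ≤ σ_i(A) ‖x‖` on the span of the bottom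
`m - i` eigenvectors of `A Aᴴ`. These dimensions add up to `m + 1`, so the two spans share a
nonzero `x`, and the triangle inequality at `x` gives `σ_i(A + B) ≤ σ_i(A) + ‖B‖₂`. Applied to
`(P, Q)` and to `(P + Q, -Q)` this yields both halves of the absolute value.
-/

open Matrix

noncomputable def spec {m n : Type*} [Fintype m] [Fintype n] [DecidableEq n]
    (A : Matrix m n ℝ) : ℝ :=
  ‖LinearMap.toContinuousLinearMap (Matrix.toEuclideanLin A)‖

/-- i-th largest singular value (0-indexed), via the decreasingly sorted
eigenvalues of A·Aᴴ. -/
noncomputable def sval {m : ℕ} {n : Type*} [Fintype n]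
    (A : Matrix (Fin m) n ℝ) (i : Fin m) : ℝ :=
  Real.sqrt
    (((Matrix.isHermitian_mul_conjTranspose_self A).eigenvalues ∘
      (Tuple.sort (Matrix.isHermitian_mul_conjTranspose_self A).eigenvalues)) i.rev)

open scoped InnerProductSpace

theorem Submodule.inf_ne_bot_of_finrank_lt_add {K V : Type*} [DivisionRing K] [AddCommGroup V]
    [Module K V] [FiniteDimensional K V] {s t : Submodule K V}
    (h : Module.finrank K V < Module.finrank K s + Module.finrank K t) : s ⊓ t ≠ ⊥ :=
  fun hst => h.not_ge (finrank_add_finrank_le_of_disjoint (disjoint_iff.2 hst))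

namespace OrthonormalBasis

variable {𝕜 ι E : Type*} [RCLike 𝕜] [Fintype ι] [NormedAddCommGroup E] [InnerProductSpace 𝕜 E]
  (b : OrthonormalBasis ι 𝕜 E)

theorem finrank_span_image (s : Set ι) :
    Module.finrank 𝕜 (Submodule.span 𝕜 (b '' s)) = Nat.card s := by
  classical
  have hli : LinearIndependent 𝕜 (fun j : s => b j) :=
    (b.orthonormal.comp _ Subtype.val_injective).linearIndependent
  rw [Set.image_eq_range, finrank_span_eq_card hli, Nat.card_eq_fintype_card]

theorem inner_eq_zero_of_mem_span_image {s : Set ι} {x : E}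
    (hx : x ∈ Submodule.span 𝕜 (b '' s)) {j : ι} (hj : j ∉ s) : ⟪b j, x⟫_𝕜 = 0 := by
  suffices Submodule.span 𝕜 (b '' s) ≤ (𝕜 ∙ b j)ᗮ from
    Submodule.mem_orthogonal_singleton_iff_inner_right.1 (this hx)
  refine Submodule.span_le.2 ?_
  rintro _ ⟨k, hk, rfl⟩
  exact Submodule.mem_orthogonal_singleton_iff_inner_right.2
    (b.orthonormal.2 fun h => hj (h ▸ hk))

variable {T : E →ₗ[𝕜] E} {μ : ι → ℝ} (hT : ∀ j, T (b j) = (μ j : 𝕜) • b j)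
include hT

theorem re_inner_apply_eq_sum (x : E) :
    RCLike.re ⟪x, T x⟫_𝕜 = ∑ j, μ j * ‖⟪b j, x⟫_𝕜‖ ^ 2 := by
  have hTx : T x = ∑ j, (⟪b j, x⟫_𝕜 * μ j) • b j := by
    conv_lhs => rw [← b.sum_repr' x]
    simp only [map_sum, map_smul, hT, smul_smul]
  rw [hTx, inner_sum, map_sum]
  refine Finset.sum_congr rfl fun j _ => ?_
  rw [inner_smul_right, ← inner_conj_symm, mul_comm, ← mul_assoc, RCLike.mul_conj,
    RCLike.norm_conj, ← RCLike.ofReal_pow, ← RCLike.ofReal_mul, RCLike.ofReal_re, mul_comm]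

theorem mul_norm_sq_le_re_inner_apply {s : Set ι} {c : ℝ} (hc : ∀ j ∈ s, c ≤ μ j) {x : E}
    (hx : x ∈ Submodule.span 𝕜 (b '' s)) : c * ‖x‖ ^ 2 ≤ RCLike.re ⟪x, T x⟫_𝕜 := by
  rw [b.re_inner_apply_eq_sum hT, ← b.sum_sq_norm_inner_right, Finset.mul_sum]
  refine Finset.sum_le_sum fun j _ => ?_
  by_cases hj : j ∈ s
  · exact mul_le_mul_of_nonneg_right (hc j hj) (sq_nonneg _)
  · simp [b.inner_eq_zero_of_mem_span_image hx hj]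

theorem re_inner_apply_le_mul_norm_sq {s : Set ι} {c : ℝ} (hc : ∀ j ∈ s, μ j ≤ c) {x : E}
    (hx : x ∈ Submodule.span 𝕜 (b '' s)) : RCLike.re ⟪x, T x⟫_𝕜 ≤ c * ‖x‖ ^ 2 := by
  have hT' : ∀ j, (-T) (b j) = ((-μ j : ℝ) : 𝕜) • b j := fun j => by simp [hT]
  simpa using b.mul_norm_sq_le_re_inner_apply hT' (c := -c) (fun j hj => neg_le_neg (hc j hj)) hx

end OrthonormalBasis

namespace Matrix.IsHermitian

variable {𝕜 : Type*} [RCLike 𝕜] {m : ℕ} {H : Matrix (Fin m) (Fin m) 𝕜} (hH : H.IsHermitian)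

/-- `hH.eigenvalues` carries no order on `Fin m`; this is its decreasing rearrangement, as in
`sval`. -/
noncomputable def sortedEigenvalues (i : Fin m) : ℝ :=
  hH.eigenvalues (Tuple.sort hH.eigenvalues i.rev)

theorem sortedEigenvalues_antitone : Antitone hH.sortedEigenvalues :=
  (Tuple.monotone_sort hH.eigenvalues).comp_antitone fun _ _ h => Fin.rev_le_rev.2 h

noncomputable def sortedEigenvectorBasis :
    OrthonormalBasis (Fin m) 𝕜 (EuclideanSpace 𝕜 (Fin m)) :=
  hH.eigenvectorBasis.reindex (Fin.revPerm.trans (Tuple.sort hH.eigenvalues)).symm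

theorem toEuclideanLin_sortedEigenvectorBasis (i : Fin m) :
    toEuclideanLin H (hH.sortedEigenvectorBasis i) =
      (hH.sortedEigenvalues i : 𝕜) • hH.sortedEigenvectorBasis i := by
  ext k
  simpa [sortedEigenvectorBasis, sortedEigenvalues, toLpLin_apply] using
    congrFun (hH.mulVec_eigenvectorBasis (Tuple.sort hH.eigenvalues i.rev)) k

theorem sortedEigenvalues_mul_norm_sq_le {i : Fin m} {x : EuclideanSpace 𝕜 (Fin m)}
    (hx : x ∈ Submodule.span 𝕜 (hH.sortedEigenvectorBasis '' Set.Iic i)) :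
    hH.sortedEigenvalues i * ‖x‖ ^ 2 ≤ RCLike.re ⟪x, toEuclideanLin H x⟫_𝕜 :=
  hH.sortedEigenvectorBasis.mul_norm_sq_le_re_inner_apply
    hH.toEuclideanLin_sortedEigenvectorBasis (fun _ hj => hH.sortedEigenvalues_antitone hj) hx

theorem re_inner_le_sortedEigenvalues_mul_norm_sq {i : Fin m} {x : EuclideanSpace 𝕜 (Fin m)}
    (hx : x ∈ Submodule.span 𝕜 (hH.sortedEigenvectorBasis '' Set.Ici i)) :
    RCLike.re ⟪x, toEuclideanLin H x⟫_𝕜 ≤ hH.sortedEigenvalues i * ‖x‖ ^ 2 :=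
  hH.sortedEigenvectorBasis.re_inner_apply_le_mul_norm_sq
    hH.toEuclideanLin_sortedEigenvectorBasis (fun _ hj => hH.sortedEigenvalues_antitone hj) hx

end Matrix.IsHermitian

theorem Matrix.re_inner_toEuclideanLin_mul_conjTranspose_self {𝕜 m n : Type*} [RCLike 𝕜]
    [Fintype m] [Fintype n] [DecidableEq m] [DecidableEq n] (A : Matrix m n 𝕜)
    (x : EuclideanSpace 𝕜 m) :
    RCLike.re ⟪x, toEuclideanLin (A * Aᴴ) x⟫_𝕜 = ‖toEuclideanLin Aᴴ x‖ ^ 2 := by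
  have hmul : toEuclideanLin (A * Aᴴ) x = toEuclideanLin A (toEuclideanLin Aᴴ x) := by
    simp [toLpLin_apply, mulVec_mulVec]
  rw [hmul, ← LinearMap.adjoint_inner_left, ← toEuclideanLin_conjTranspose_eq_adjoint,
    inner_self_eq_norm_sq]

open scoped Matrix.Norms.L2Operator in
theorem spec_conjTranspose {m n : Type*} [Fintype m] [Fintype n] [DecidableEq m] [DecidableEq n]
    (A : Matrix m n ℝ) : spec Aᴴ = spec A :=
  l2_opNorm_conjTranspose A

theorem spec_neg {m n : Type*} [Fintype m] [Fintype n] [DecidableEq n] (A : Matrix m n ℝ) :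
    spec (-A) = spec A := by
  rw [spec, spec, map_neg, map_neg, norm_neg]

theorem norm_toEuclideanLin_le_spec_mul {m n : Type*} [Fintype m] [Fintype n] [DecidableEq n]
    (A : Matrix m n ℝ) (x : EuclideanSpace ℝ n) : ‖toEuclideanLin A x‖ ≤ spec A * ‖x‖ :=
  (toEuclideanLin A).toContinuousLinearMap.le_opNorm x

namespace Matrix

variable {m : ℕ} {n : Type*} [Fintype n]

noncomputable def leftSingularBasis (A : Matrix (Fin m) n ℝ) :
    OrthonormalBasis (Fin m) ℝ (EuclideanSpace ℝ (Fin m)) :=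
  (isHermitian_mul_conjTranspose_self A).sortedEigenvectorBasis

theorem sval_mul_norm_eq_sqrt (A : Matrix (Fin m) n ℝ) (i : Fin m) (x : EuclideanSpace ℝ (Fin m)) :
    sval A i * ‖x‖ =
      √((isHermitian_mul_conjTranspose_self A).sortedEigenvalues i * ‖x‖ ^ 2) := by
  rw [Real.sqrt_mul' _ (sq_nonneg _), Real.sqrt_sq (norm_nonneg _)]
  rfl

variable [DecidableEq n] (A : Matrix (Fin m) n ℝ) {i : Fin m} {x : EuclideanSpace ℝ (Fin m)}

theorem sval_mul_norm_le (hx : x ∈ Submodule.span ℝ (A.leftSingularBasis '' Set.Iic i)) :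
    sval A i * ‖x‖ ≤ ‖toEuclideanLin Aᴴ x‖ := by
  have h := (isHermitian_mul_conjTranspose_self A).sortedEigenvalues_mul_norm_sq_le hx
  rw [re_inner_toEuclideanLin_mul_conjTranspose_self] at h
  rw [sval_mul_norm_eq_sqrt]
  exact (Real.sqrt_le_left (norm_nonneg _)).2 h

theorem norm_le_sval_mul (hx : x ∈ Submodule.span ℝ (A.leftSingularBasis '' Set.Ici i)) :
    ‖toEuclideanLin Aᴴ x‖ ≤ sval A i * ‖x‖ := by
  have h := (isHermitian_mul_conjTranspose_self A).re_inner_le_sortedEigenvalues_mul_norm_sq hx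
  rw [re_inner_toEuclideanLin_mul_conjTranspose_self] at h
  rw [sval_mul_norm_eq_sqrt]
  exact Real.le_sqrt_of_sq_le h

theorem sval_add_le (B : Matrix (Fin m) n ℝ) (i : Fin m) :
    sval (A + B) i ≤ sval A i + spec B := by
  have hdim := Submodule.inf_ne_bot_of_finrank_lt_add
    (s := Submodule.span ℝ ((A + B).leftSingularBasis '' Set.Iic i))
    (t := Submodule.span ℝ (A.leftSingularBasis '' Set.Ici i))
    (by simp [OrthonormalBasis.finrank_span_image]; omega)
  obtain ⟨x, ⟨hxAB, hxA⟩, hx0⟩ := (Submodule.ne_bot_iff _).1 hdim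
  refine le_of_mul_le_mul_right ?_ (norm_pos_iff.2 hx0)
  calc sval (A + B) i * ‖x‖ ≤ ‖toEuclideanLin (A + B)ᴴ x‖ := (A + B).sval_mul_norm_le hxAB
    _ ≤ ‖toEuclideanLin Aᴴ x‖ + ‖toEuclideanLin Bᴴ x‖ := by
        rw [conjTranspose_add, map_add, LinearMap.add_apply]
        exact norm_add_le _ _
    _ ≤ sval A i * ‖x‖ + spec B * ‖x‖ := by
        rw [← spec_conjTranspose B]
        exact add_le_add (A.norm_le_sval_mul hxA) (norm_toEuclideanLin_le_spec_mul _ _)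
    _ = (sval A i + spec B) * ‖x‖ := (add_mul ..).symm

end Matrix

/-- Weyl's perturbation theorem: |σ_i(P+Q) − σ_i(P)| ≤ ‖Q‖₂. -/
theorem weyl_perturbation {m n : ℕ} (P Q : Matrix (Fin m) (Fin n) ℝ) (i : Fin m) :
    |sval (P + Q) i - sval P i| ≤ spec Q := by
  have hPQ := P.sval_add_le Q i
  have hPQ_neg := (P + Q).sval_add_le (-Q) i
  rw [add_neg_cancel_right, spec_neg] at hPQ_neg
  exact abs_sub_le_iff.2 ⟨by linarith, by linarith⟩
end

section
/- Lidskii's theorem (trace form used in the paper): for n×n Hermitian matrices A and B and any indices 1 ≤ i₁ < ⋯ < i_k ≤ n, the sum over j of λ_{i_j}(A+B) is at most the sum over j of λ_{i_j}(A) plus the sum of the k largest eigenvalues of B. -/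
open Matrix

/-- i-th largest eigenvalue (0-indexed) of a Hermitian matrix. -/
noncomputable def eigDesc {n : ℕ} {A : Matrix (Fin n) (Fin n) ℂ}
    (hA : A.IsHermitian) (i : Fin n) : ℝ :=
  (hA.eigenvalues ∘ Tuple.sort hA.eigenvalues) i.rev

/-!
If `M ≤ N` in the Loewner order then `λᵢ(M) ≤ λᵢ(N)` (Weyl): the span of the top `i + 1`
eigenvectors of `M` meets the span of the bottom `n - i` eigenvectors of `N`, and on a common
nonzero vector the Rayleigh quotients are squeezed between `λᵢ(M)` and `λᵢ(N)`.

For Lidskii, let `c = λₖ(B)` and `P = (B - c)⁺`. Then `A + B ≤ (A + P) + c`, so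
`λ_{i_j}(A + B) ≤ λ_{i_j}(A + P) + c`. The differences `λᵢ(A + P) - λᵢ(A)` are all nonnegative, so
their sum over the `i_j` is at most their total `tr P = ∑_{j ≤ k} λⱼ(B) - k c`.
-/

open scoped InnerProductSpace MatrixOrder ComplexOrder
open Finset

theorem Fintype.sum_comp_le_sum_of_nonneg {α β M : Type*} [Fintype α] [Fintype β]
    [AddCommMonoid M] [Preorder M] [AddLeftMono M] {e : α → β} (he : Function.Injective e)
    {f : β → M} (hf : ∀ i, 0 ≤ f i) : ∑ j, f (e j) ≤ ∑ i, f i := by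
  classical
  rw [← Finset.sum_image he.injOn]
  exact Finset.sum_le_univ_sum_of_nonneg hf

theorem Fin.sum_max_sub_eq_sum_castLE {n k : ℕ} (hk : k ≤ n) {f : Fin n → ℝ} {c : ℝ}
    (hlt : ∀ i : Fin n, (i : ℕ) < k → c ≤ f i) (hge : ∀ i : Fin n, k ≤ (i : ℕ) → f i ≤ c) :
    ∑ i, max (f i - c) 0 = ∑ j : Fin k, (f (Fin.castLE hk j) - c) := by
  refine (Fintype.sum_of_injective _ (Fin.castLE_injective hk) _ _ (fun i hi => ?_)
    (fun j => ?_)).symm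
  · have hki : k ≤ (i : ℕ) := by simpa [Fin.range_castLE] using hi
    exact max_eq_right (sub_nonpos.2 (hge i hki))
  · exact (max_eq_left (sub_nonneg.2 (hlt _ j.isLt))).symm

namespace Module.Basis

variable {K V : Type*} [Field K] [AddCommGroup V] [Module K V] {n : ℕ}

theorem exists_ne_zero_repr_eq_zero (b c : Basis (Fin n) K V) (i : Fin n) :
    ∃ x ≠ 0, (∀ j, i < j → b.repr x j = 0) ∧ ∀ j, j < i → c.repr x j = 0 := by
  have : FiniteDimensional K V := b.finiteDimensional_of_finite
  let L : V →ₗ[K] (Finset.Ioi i → K) × (Finset.Iio i → K) :=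
    (LinearMap.pi fun j => b.coord j.1).prod (LinearMap.pi fun j => c.coord j.1)
  have hL : Module.finrank K ((Finset.Ioi i → K) × (Finset.Iio i → K)) < Module.finrank K V := by
    simp only [Module.finrank_prod, Module.finrank_fintype_fun_eq_card, Fintype.card_coe,
      Fin.card_Ioi, Fin.card_Iio, Module.finrank_eq_card_basis b, Fintype.card_fin]
    omega
  obtain ⟨x, hx, hx0⟩ :=
    Submodule.exists_mem_ne_zero_of_ne_bot (LinearMap.ker_ne_bot_of_finrank_lt hL)
  have hLx : L x = 0 := LinearMap.mem_ker.1 hx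
  refine ⟨x, hx0, fun j hj => ?_, fun j hj => ?_⟩
  · simpa [L] using congrFun (congrArg Prod.fst hLx) ⟨j, Finset.mem_Ioi.2 hj⟩
  · simpa [L] using congrFun (congrArg Prod.snd hLx) ⟨j, Finset.mem_Iio.2 hj⟩

end Module.Basis

namespace OrthonormalBasis

variable {𝕜 E ι : Type*} [RCLike 𝕜] [NormedAddCommGroup E] [InnerProductSpace 𝕜 E] [Fintype ι]

theorem re_inner_apply_self_eq_sum (b : OrthonormalBasis ι 𝕜 E) {T : E →ₗ[𝕜] E} {μ : ι → ℝ}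
    (hT : ∀ j, T (b j) = (μ j : 𝕜) • b j) (x : E) :
    RCLike.re ⟪T x, x⟫_𝕜 = ∑ j, μ j * ‖b.repr x j‖ ^ 2 := by
  have hTx : T x = ∑ j, ((μ j : 𝕜) * b.repr x j) • b j := by
    conv_lhs => rw [← b.sum_repr x]
    simp only [map_sum, map_smul, hT, smul_smul, mul_comm]
  rw [hTx, sum_inner, map_sum]
  refine Finset.sum_congr rfl fun j _ => ?_
  rw [inner_smul_left, ← b.repr_apply_apply, map_mul (starRingEnd 𝕜), RCLike.conj_ofReal,
    mul_assoc, RCLike.conj_mul, ← RCLike.ofReal_pow, ← RCLike.ofReal_mul, RCLike.ofReal_re]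

theorem norm_sq_eq_sum (b : OrthonormalBasis ι 𝕜 E) (x : E) :
    ‖x‖ ^ 2 = ∑ j, ‖b.repr x j‖ ^ 2 := by
  rw [← b.repr.norm_map, EuclideanSpace.norm_sq_eq]

section LinearOrder

variable [LinearOrder ι] (b : OrthonormalBasis ι 𝕜 E) {T : E →ₗ[𝕜] E} {μ : ι → ℝ} {i : ι} {x : E}

theorem mul_norm_sq_le_re_inner_apply_self (hT : ∀ j, T (b j) = (μ j : 𝕜) • b j) (hμ : Antitone μ)
    (hx : ∀ j, i < j → b.repr x j = 0) :
    μ i * ‖x‖ ^ 2 ≤ RCLike.re ⟪T x, x⟫_𝕜 := by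
  rw [b.re_inner_apply_self_eq_sum hT, b.norm_sq_eq_sum, Finset.mul_sum]
  refine Finset.sum_le_sum fun j _ => ?_
  rcases le_or_gt j i with hji | hij
  · exact mul_le_mul_of_nonneg_right (hμ hji) (sq_nonneg _)
  · simp [hx j hij]

theorem re_inner_apply_self_le_mul_norm_sq (hT : ∀ j, T (b j) = (μ j : 𝕜) • b j) (hμ : Antitone μ)
    (hx : ∀ j, j < i → b.repr x j = 0) :
    RCLike.re ⟪T x, x⟫_𝕜 ≤ μ i * ‖x‖ ^ 2 := by
  rw [b.re_inner_apply_self_eq_sum hT, b.norm_sq_eq_sum, Finset.mul_sum]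
  refine Finset.sum_le_sum fun j _ => ?_
  rcases le_or_gt i j with hij | hji
  · exact mul_le_mul_of_nonneg_right (hμ hij) (sq_nonneg _)
  · simp [hx j hji]

end LinearOrder

end OrthonormalBasis

namespace LinearMap

variable {𝕜 E : Type*} [RCLike 𝕜] [NormedAddCommGroup E] [InnerProductSpace 𝕜 E] {n : ℕ}

theorem eigenvalue_le_of_le {S T : E →ₗ[𝕜] E} (hST : S ≤ T) {b c : OrthonormalBasis (Fin n) 𝕜 E}
    {μ ν : Fin n → ℝ} (hS : ∀ j, S (b j) = (μ j : 𝕜) • b j)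
    (hT : ∀ j, T (c j) = (ν j : 𝕜) • c j) (hμ : Antitone μ) (hν : Antitone ν) (i : Fin n) :
    μ i ≤ ν i := by
  obtain ⟨x, hx0, hxb, hxc⟩ := b.toBasis.exists_ne_zero_repr_eq_zero c.toBasis i
  simp only [OrthonormalBasis.coe_toBasis_repr_apply] at hxb hxc
  have hSTx : RCLike.re ⟪S x, x⟫_𝕜 ≤ RCLike.re ⟪T x, x⟫_𝕜 := by
    simpa [inner_sub_left] using hST.2 x
  have hx : 0 < ‖x‖ ^ 2 := by positivity
  refine le_of_mul_le_mul_right ?_ hx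
  calc μ i * ‖x‖ ^ 2 ≤ RCLike.re ⟪S x, x⟫_𝕜 := b.mul_norm_sq_le_re_inner_apply_self hS hμ hxb
    _ ≤ RCLike.re ⟪T x, x⟫_𝕜 := hSTx
    _ ≤ ν i * ‖x‖ ^ 2 := c.re_inner_apply_self_le_mul_norm_sq hT hν hxc

end LinearMap

theorem Matrix.IsHermitian.trace_cfc {𝕜 m : Type*} [RCLike 𝕜] [Fintype m] [DecidableEq m]
    {A : Matrix m m 𝕜} (hA : A.IsHermitian) (f : ℝ → ℝ) :
    trace (cfc f A) = ∑ i, (f (hA.eigenvalues i) : 𝕜) := by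
  rw [hA.cfc_eq, IsHermitian.cfc, Unitary.conjStarAlgAut_apply, trace_mul_cycle,
    Unitary.coe_star_mul_self, one_mul, trace_diagonal]
  rfl

theorem Matrix.toEuclideanLin_mono {𝕜 m : Type*} [RCLike 𝕜] [Fintype m] [DecidableEq m]
    {M N : Matrix m m 𝕜} (h : M ≤ N) : toEuclideanLin M ≤ toEuclideanLin N := by
  rw [LinearMap.le_def, ← map_sub, isPositive_toEuclideanLin_iff]
  exact h

section eigDesc

variable {n : ℕ} {A : Matrix (Fin n) (Fin n) ℂ}

theorem eigDesc_antitone (hA : A.IsHermitian) : Antitone (eigDesc hA) :=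
  fun _ _ hab => Tuple.monotone_sort hA.eigenvalues (Fin.rev_le_rev.mpr hab)

theorem sum_comp_eigDesc (hA : A.IsHermitian) (f : ℝ → ℝ) :
    ∑ i, f (eigDesc hA i) = ∑ i, f (hA.eigenvalues i) :=
  Fintype.sum_equiv (Fin.revPerm.trans (Tuple.sort hA.eigenvalues)) _ _ fun _ => rfl

theorem re_trace_eq_sum_eigDesc (hA : A.IsHermitian) : (trace A).re = ∑ i, eigDesc hA i := by
  rw [hA.trace_eq_sum_eigenvalues]
  simpa using (sum_comp_eigDesc hA id).symm

noncomputable def eigDescBasis (hA : A.IsHermitian) :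
    OrthonormalBasis (Fin n) ℂ (EuclideanSpace ℂ (Fin n)) :=
  hA.eigenvectorBasis.reindex (Fin.revPerm.trans (Tuple.sort hA.eigenvalues)).symm

theorem toEuclideanLin_eigDescBasis (hA : A.IsHermitian) (j : Fin n) :
    toEuclideanLin A (eigDescBasis hA j) = (eigDesc hA j : ℂ) • eigDescBasis hA j := by
  ext1
  simp [eigDescBasis, eigDesc, hA.mulVec_eigenvectorBasis, Complex.real_smul]

theorem eigDesc_le_add_of_le {M N : Matrix (Fin n) (Fin n) ℂ} (hM : M.IsHermitian)
    (hN : N.IsHermitian) {r : ℝ} (h : M ≤ N + algebraMap ℝ _ r) (i : Fin n) :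
    eigDesc hM i ≤ eigDesc hN i + r := by
  refine LinearMap.eigenvalue_le_of_le (c := eigDescBasis hN) (toEuclideanLin_mono h)
    (toEuclideanLin_eigDescBasis hM) (fun j => ?_) (eigDesc_antitone hM)
    ((eigDesc_antitone hN).add_const r) i
  rw [map_add, LinearMap.add_apply, toEuclideanLin_eigDescBasis,
    IsScalarTower.algebraMap_apply ℝ ℂ, Algebra.algebraMap_eq_smul_one, map_smul, toLpLin_one]
  simp [add_smul]

theorem eigDesc_le_of_le {M N : Matrix (Fin n) (Fin n) ℂ} (hM : M.IsHermitian)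
    (hN : N.IsHermitian) (h : M ≤ N) (i : Fin n) : eigDesc hM i ≤ eigDesc hN i := by
  simpa using eigDesc_le_add_of_le hM hN (r := 0) (by simpa using h) i

end eigDesc

theorem sum_comp_eigDesc_sub_le_re_trace_sub {α : Type*} [Fintype α] {n : ℕ}
    {M N : Matrix (Fin n) (Fin n) ℂ} (hM : M.IsHermitian) (hN : N.IsHermitian) (h : M ≤ N)
    {e : α → Fin n} (he : Function.Injective e) :
    ∑ j, (eigDesc hN (e j) - eigDesc hM (e j)) ≤ (trace (N - M)).re := calc
  _ ≤ ∑ i, (eigDesc hN i - eigDesc hM i) :=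
    Fintype.sum_comp_le_sum_of_nonneg he fun i => sub_nonneg.2 (eigDesc_le_of_le hM hN h i)
  _ = (trace (N - M)).re := by
    rw [trace_sub, Complex.sub_re, re_trace_eq_sum_eigDesc hN, re_trace_eq_sum_eigDesc hM,
      sum_sub_distrib]

theorem re_trace_cfc_max_sub_eigDesc {n k : ℕ} {B : Matrix (Fin n) (Fin n) ℂ}
    (hB : B.IsHermitian) (hk : k ≤ n) (hk0 : 0 < k) :
    (trace (cfc (fun t => max (t - eigDesc hB ⟨k - 1, by omega⟩) 0) B)).re =
      ∑ j : Fin k, (eigDesc hB (Fin.castLE hk j) - eigDesc hB ⟨k - 1, by omega⟩) := by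
  rw [hB.trace_cfc, Complex.re_sum]
  simp only [← RCLike.re_to_complex, RCLike.ofReal_re]
  rw [← sum_comp_eigDesc hB fun t => max (t - eigDesc hB ⟨k - 1, by omega⟩) 0]
  exact Fin.sum_max_sub_eq_sum_castLE hk
    (fun i hi => eigDesc_antitone hB (Fin.le_def.2 (by dsimp only; omega)))
    (fun i hi => eigDesc_antitone hB (Fin.le_def.2 (by dsimp only; omega)))

/-- Lidskii's theorem: for Hermitian A, B and indices i₁ < ⋯ < i_k,
Σ_j λ_{i_j}(A+B) ≤ Σ_j λ_{i_j}(A) + (sum of the k largest eigenvalues of B). -/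
theorem lidskii {n k : ℕ} (hk : k ≤ n)
    (A B : Matrix (Fin n) (Fin n) ℂ)
    (hA : A.IsHermitian) (hB : B.IsHermitian)
    (ι : Fin k → Fin n) (hι : StrictMono ι) :
    ∑ j, eigDesc (hA.add hB) (ι j) ≤
      ∑ j, eigDesc hA (ι j) + ∑ j : Fin k, eigDesc hB (Fin.castLE hk j) := by
  obtain rfl | hk0 := k.eq_zero_or_pos
  · simp
  set c := eigDesc hB ⟨k - 1, by omega⟩
  set P := cfc (fun t => max (t - c) 0) B
  have hP : 0 ≤ P := cfc_nonneg fun t _ => le_max_right _ _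
  have hAP : (A + P).IsHermitian := hA.add (nonneg_iff_posSemidef.1 hP).isHermitian
  have hBP : B ≤ P + algebraMap ℝ _ c := calc
    B = cfc (fun t => t) B := (cfc_id' ℝ B hB.isSelfAdjoint).symm
    _ ≤ cfc (fun t => max (t - c) 0 + c) B := cfc_mono fun t _ => by
        linarith [le_max_left (t - c) 0]
    _ = P + algebraMap ℝ _ c := cfc_add_const c _ B
  have h_upper : ∑ j, eigDesc (hA.add hB) (ι j) ≤ ∑ j, eigDesc hAP (ι j) + k * c := by
    have := sum_le_sum fun j (_ : j ∈ univ) =>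
      eigDesc_le_add_of_le (hA.add hB) hAP (by rw [add_assoc]; exact add_le_add_right hBP A) (ι j)
    simpa [sum_add_distrib] using this
  have h_gain := sum_comp_eigDesc_sub_le_re_trace_sub hA hAP (le_add_of_nonneg_right hP)
    hι.injective
  rw [add_sub_cancel_left, re_trace_cfc_max_sub_eigDesc hB hk hk0] at h_gain
  simp only [sum_sub_distrib, sum_const, card_univ, Fintype.card_fin, nsmul_eq_mul] at h_gain
  linarith
end
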